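/- arXiv:2511.22080 — 2 statements merged into one kernel-verified Lean document; each statement's English description precedes it below -/
import Mathlib

section
/- Let f : ℝ^d → ℝ be a differentiable function whose gradient is L-Lipschitz (L ≥ 0). Let γ > 0 satisfy γ·L ≤ 1/24, and let x, g ∈ ℝ^d be arbitrary. Define x⁺ = x − γ·g. Then f(x⁺) ≤ f(x) − (11γ/24)·‖∇f(x)‖² + (13γ/24)·‖∇f(x) − g‖². -/
open InnerProductSpace

theorem final_ineq (L γ : ℝ) (hL : 0 ≤ L) (hγ : 0 < γ) (hγL : γ * L ≤ 1 / 24)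
    (a b p fy fx : ℝ) (ha : 0 ≤ a) (hb : 0 ≤ b) (hcs : p ≤ a * b)
    (hmain : fy ≤ fx - γ * (a ^ 2 - p) + L * γ ^ 2 * (a ^ 2 - 2 * p + b ^ 2)) :
    fy ≤ fx - (11 * γ / 24) * a ^ 2 + (13 * γ / 24) * b ^ 2 := by
  have hp : p ≤ (a ^ 2 + b ^ 2) / 2 := by nlinarith [sq_nonneg (a - b)]
  have h1 : 0 ≤ γ * (1 - 2 * (L * γ)) := by nlinarith
  have h2 := mul_le_mul_of_nonneg_left hp h1
  nlinarith [h2, sq_nonneg a, sq_nonneg b, mul_nonneg hγ.le (sq_nonneg a),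
    mul_nonneg hγ.le (sq_nonneg b)]


/-- **Descent lemma step (Lemma 1 of FedWMSAM analysis).**
If `f : ℝ^d → ℝ` is differentiable with `L`-Lipschitz gradient (`L ≥ 0`) and
`γ > 0` satisfies `γ·L ≤ 1/24`, then for any point `x` and any direction `g`,
the point `x⁺ = x − γ·g` satisfies
`f(x⁺) ≤ f(x) − (11γ/24)·‖∇f(x)‖² + (13γ/24)·‖∇f(x) − g‖²`. -/
theorem stmt_0 {d : ℕ} (f : EuclideanSpace ℝ (Fin d) → ℝ)
    (f' : EuclideanSpace ℝ (Fin d) → EuclideanSpace ℝ (Fin d))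
    (L γ : ℝ) (hL : 0 ≤ L)
    (hgrad : ∀ y, HasGradientAt f (f' y) y)
    (hlip : ∀ y z, ‖f' y - f' z‖ ≤ L * ‖y - z‖)
    (hγ : 0 < γ) (hγL : γ * L ≤ 1 / 24)
    (x g : EuclideanSpace ℝ (Fin d)) :
    f (x - γ • g) ≤
      f x - (11 * γ / 24) * ‖f' x‖ ^ 2 + (13 * γ / 24) * ‖f' x - g‖ ^ 2 := by
  set y := x - γ • g with hy
  set φ := InnerProductSpace.toDual ℝ (EuclideanSpace ℝ (Fin d)) (f' x) with hφ
  have key : ‖f y - f x - φ (y - x)‖ ≤ (L * ‖y - x‖) * ‖y - x‖ := by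
    apply Convex.norm_image_sub_le_of_norm_hasFDerivWithin_le'
      (f' := fun z => InnerProductSpace.toDual ℝ _ (f' z))
      (fun z _ => ((hgrad z).hasFDerivAt).hasFDerivWithinAt)
      ?_ (convex_segment x y) (left_mem_segment ℝ x y) (right_mem_segment ℝ x y)
    intro z hz
    rw [← LinearIsometryEquiv.map_sub, LinearIsometryEquiv.norm_map]
    refine (hlip z x).trans (mul_le_mul_of_nonneg_left ?_ hL)
    obtain ⟨a, b, ha, hb, hab, rfl⟩ := hz
    have : a • x + b • y - x = b • (y - x) := by
      rw [smul_sub]; rw [show (a:ℝ) = 1 - b by linarith]; module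
    rw [this, norm_smul, Real.norm_eq_abs, abs_of_nonneg hb]
    nlinarith [norm_nonneg (y - x)]
  have hyx : y - x = -(γ • g) := by rw [hy]; abel
  have hnyx : ‖y - x‖ = γ * ‖g‖ := by
    rw [hyx, norm_neg, norm_smul, Real.norm_eq_abs, abs_of_pos hγ]
  have hφval : φ (y - x) = -(γ * ⟪f' x, g⟫_ℝ) := by
    rw [hyx, hφ, map_neg]
    simp [InnerProductSpace.toDual_apply_apply, real_inner_smul_right]
  have hmain : f y ≤ f x - γ * ⟪f' x, g⟫_ℝ + L * (γ * ‖g‖) ^ 2 := by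
    have := (abs_le.mp (by rwa [Real.norm_eq_abs] at key)).2
    rw [hφval, hnyx] at this
    nlinarith
  -- now algebra
  set a := ‖f' x‖
  set e := f' x - g with he
  have hg : g = f' x - e := by rw [he]; abel
  have hip : ⟪f' x, g⟫_ℝ = a ^ 2 - ⟪f' x, e⟫_ℝ := by
    rw [hg, inner_sub_right, real_inner_self_eq_norm_sq]
  have hng : ‖g‖ ^ 2 = a ^ 2 - 2 * ⟪f' x, e⟫_ℝ + ‖e‖ ^ 2 := by
    rw [hg, ← real_inner_self_eq_norm_sq, inner_sub_sub_self,
      real_inner_self_eq_norm_sq, real_inner_self_eq_norm_sq, real_inner_comm]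
    ring
  have hcs : ⟪f' x, e⟫_ℝ ≤ a * ‖e‖ := real_inner_le_norm _ _
  exact final_ineq L γ hL hγ hγL a ‖e‖ ⟪f' x, e⟫_ℝ (f y) (f x) (norm_nonneg _) (norm_nonneg _)
    hcs (by
      rw [hip] at hmain
      have h2 : L * (γ * ‖g‖) ^ 2 = L * γ ^ 2 * (a ^ 2 - 2 * ⟪f' x, e⟫_ℝ + ‖e‖ ^ 2) := by
        rw [mul_pow, hng]; ring
      linarith)
end

section
/- Let N ≥ 2 and 1 ≤ S ≤ N be integers, let v₁, …, v_N ∈ ℝ^d, and set v̄ = (1/N)·∑_{i=1}^N vᵢ. Then the average of ‖(1/S)·∑_{i∈s} vᵢ‖² over all size-S subsets s of {1, …, N} equals ((N − S)/(S·(N − 1)))·(1/N)·∑_{i=1}^N ‖vᵢ‖² + (N·(S − 1)/(S·(N − 1)))·‖v̄‖². -/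
/-!
Expanding `‖∑_{i∈s} vᵢ‖²` into inner products and exchanging the sums, every `⟪vᵢ, vⱼ⟫` gets
weighted by the number of `S`-subsets containing both `i` and `j`, which is `C(N,S)·S/N` for
`i = j` and `C(N,S)·S(S-1)/(N(N-1))` otherwise. Writing the off-diagonal part as
`‖∑ vᵢ‖² - ∑ ‖vᵢ‖²` gives the formula.
-/

open Finset

/-- Cleared of denominators: a uniform `S`-subset of `u` contains `t` with probability
`S.descFactorial #t / (#u).descFactorial #t`. -/
theorem Finset.card_filter_powersetCard_subset_mul_descFactorial {α : Type*} [DecidableEq α]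
    (t u : Finset α) (htu : t ⊆ u) (S : ℕ) :
    #{s ∈ u.powersetCard S | t ⊆ s} * (#u).descFactorial #t
      = (#u).choose S * S.descFactorial #t := by
  rcases le_or_gt #t S with htS | hSt
  · rw [card_filter_powersetCard_subset t u S htu htS, Nat.descFactorial_eq_factorial_mul_choose,
      Nat.descFactorial_eq_factorial_mul_choose, mul_left_comm ((#u).choose S),
      Nat.choose_mul htS]
    ring
  · have hempty : {s ∈ u.powersetCard S | t ⊆ s} = ∅ :=
      filter_eq_empty_iff.2 fun s hs hts =>
        (card_le_card hts).not_gt ((mem_powersetCard.1 hs).2 ▸ hSt)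
    rw [hempty, Nat.descFactorial_eq_zero_iff_lt.2 hSt, card_empty, zero_mul, mul_zero]

theorem Finset.sum_sum_sum_mem_eq_sum_sum_card_smul {ι M : Type*} [Fintype ι] [DecidableEq ι]
    [AddCommMonoid M] (𝒮 : Finset (Finset ι)) (f : ι → ι → M) :
    ∑ s ∈ 𝒮, ∑ i ∈ s, ∑ j ∈ s, f i j = ∑ i, ∑ j, #{s ∈ 𝒮 | i ∈ s ∧ j ∈ s} • f i j := by
  calc ∑ s ∈ 𝒮, ∑ i ∈ s, ∑ j ∈ s, f i j
      = ∑ s ∈ 𝒮, ∑ i, ∑ j, if i ∈ s ∧ j ∈ s then f i j else 0 := by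
        simp only [ite_and, sum_ite_irrel, sum_const_zero, sum_ite_mem, univ_inter]
    _ = ∑ i, ∑ j, ∑ s ∈ 𝒮, if i ∈ s ∧ j ∈ s then f i j else 0 := by
        rw [sum_comm]
        exact sum_congr rfl fun i _ => sum_comm
    _ = ∑ i, ∑ j, #{s ∈ 𝒮 | i ∈ s ∧ j ∈ s} • f i j := by
        simp only [← sum_filter, sum_const]

theorem cast_card_filter_powersetCard_mem_and_mem_mul {ι : Type*} [Fintype ι] [DecidableEq ι]
    (S : ℕ) (i j : ι) :
    (#{s ∈ powersetCard S univ | i ∈ s ∧ j ∈ s} : ℝ) * (Fintype.card ι * (Fintype.card ι - 1))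
      = (Fintype.card ι).choose S
          * if i = j then S * (Fintype.card ι - 1 : ℝ) else S * (S - 1 : ℝ) := by
  split_ifs with hij
  · subst hij
    have key := card_filter_powersetCard_subset_mul_descFactorial {i} univ (subset_univ _) S
    simp only [singleton_subset_iff, card_singleton, Nat.descFactorial_one, card_univ] at key
    have hcast : (#{s ∈ powersetCard S univ | i ∈ s} : ℝ) * Fintype.card ι
        = (Fintype.card ι).choose S * S := by
      exact_mod_cast key
    simp only [and_self]
    linear_combination (Fintype.card ι - 1 : ℝ) * hcast
  · have key := card_filter_powersetCard_subset_mul_descFactorial {i, j} univ (subset_univ _) S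
    simp only [insert_subset_iff, singleton_subset_iff, card_pair hij, card_univ] at key
    have hcast := congrArg (fun m : ℕ => (m : ℝ)) key
    push_cast [Nat.cast_descFactorial_two] at hcast
    exact hcast

section InnerProductSpace

variable {ι E : Type*} [NormedAddCommGroup E] [InnerProductSpace ℝ E]

theorem norm_sum_sq_eq_sum_sum_inner (s : Finset ι) (v : ι → E) :
    ‖∑ i ∈ s, v i‖ ^ 2 = ∑ i ∈ s, ∑ j ∈ s, inner ℝ (v i) (v j) := by
  rw [← real_inner_self_eq_norm_sq, sum_inner]
  simp_rw [inner_sum]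

theorem sum_sum_ite_mul_inner [Fintype ι] [DecidableEq ι] (a b : ℝ) (v : ι → E) :
    ∑ i, ∑ j, (if i = j then a else b) * inner ℝ (v i) (v j)
      = b * ‖∑ i, v i‖ ^ 2 + (a - b) * ∑ i, ‖v i‖ ^ 2 := by
  have hsplit : ∀ i j, (if i = j then a else b) * inner ℝ (v i) (v j)
      = b * inner ℝ (v i) (v j) + if i = j then (a - b) * inner ℝ (v i) (v j) else 0 := by
    intro i j
    split_ifs <;> ring
  simp only [hsplit, sum_add_distrib, sum_ite_eq, mem_univ, if_true, ← mul_sum,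
    norm_sum_sq_eq_sum_sum_inner, real_inner_self_eq_norm_sq]

theorem sum_powersetCard_norm_sum_sq [Fintype ι] (S : ℕ) (v : ι → E) :
    (Fintype.card ι * (Fintype.card ι - 1) : ℝ)
        * ∑ s ∈ powersetCard S univ, ‖∑ i ∈ s, v i‖ ^ 2
      = (Fintype.card ι).choose S * S
          * ((S - 1) * ‖∑ i, v i‖ ^ 2 + (Fintype.card ι - S) * ∑ i, ‖v i‖ ^ 2) := by
  classical
  calc (Fintype.card ι * (Fintype.card ι - 1) : ℝ)
        * ∑ s ∈ powersetCard S univ, ‖∑ i ∈ s, v i‖ ^ 2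
      = ∑ i, ∑ j, (#{s ∈ powersetCard S univ | i ∈ s ∧ j ∈ s} : ℝ)
          * (Fintype.card ι * (Fintype.card ι - 1)) * inner ℝ (v i) (v j) := by
        simp only [norm_sum_sq_eq_sum_sum_inner, sum_sum_sum_mem_eq_sum_sum_card_smul,
          nsmul_eq_mul, mul_sum]
        ring_nf
    _ = (Fintype.card ι).choose S * ∑ i, ∑ j,
          (if i = j then S * (Fintype.card ι - 1 : ℝ) else S * (S - 1 : ℝ))
            * inner ℝ (v i) (v j) := by
        simp_rw [cast_card_filter_powersetCard_mem_and_mem_mul, mul_sum, mul_assoc]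
    _ = (Fintype.card ι).choose S * S
          * ((S - 1) * ‖∑ i, v i‖ ^ 2 + (Fintype.card ι - S) * ∑ i, ‖v i‖ ^ 2) := by
        rw [sum_sum_ite_mul_inner]
        ring

end InnerProductSpace

/-- **Uniform subsampling variance identity (Lemma 3), uncentered form.**
For vectors `v₁, …, v_N ∈ ℝ^d` with mean `v̄`, the average of `‖(1/S)·∑_{i∈s} vᵢ‖²`
over all subsets `s ⊆ {1, …, N}` of cardinality `S` equals
`((N − S)/(S·(N − 1)))·(1/N)·∑ᵢ ‖vᵢ‖² + (N·(S − 1)/(S·(N − 1)))·‖v̄‖²`. -/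
theorem stmt_5 {d N S : ℕ} (hN : 2 ≤ N) (hS1 : 1 ≤ S) (hSN : S ≤ N)
    (v : Fin N → EuclideanSpace ℝ (Fin d))
    (vbar : EuclideanSpace ℝ (Fin d))
    (hvbar : vbar = (N : ℝ)⁻¹ • ∑ i, v i) :
    ((N.choose S : ℝ))⁻¹ *
        ∑ s ∈ powersetCard S (univ : Finset (Fin N)), ‖(S : ℝ)⁻¹ • ∑ i ∈ s, v i‖ ^ 2
      = (((N : ℝ) - (S : ℝ)) / ((S : ℝ) * ((N : ℝ) - 1))) *
          ((N : ℝ)⁻¹ * ∑ i, ‖v i‖ ^ 2)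
        + ((N : ℝ) * ((S : ℝ) - 1) / ((S : ℝ) * ((N : ℝ) - 1))) * ‖vbar‖ ^ 2 := by
  have hN0 : (N : ℝ) ≠ 0 := Nat.cast_ne_zero.2 (by omega)
  have hN1 : (N : ℝ) - 1 ≠ 0 := sub_ne_zero.2 (by exact_mod_cast (by omega : N ≠ 1))
  have hS0 : (S : ℝ) ≠ 0 := Nat.cast_ne_zero.2 (by omega)
  have hC : (N.choose S : ℝ) ≠ 0 := Nat.cast_ne_zero.2 (Nat.choose_pos hSN).ne'
  have hsum := sum_powersetCard_norm_sum_sq S v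
  rw [Fintype.card_fin] at hsum
  simp only [hvbar, norm_smul, mul_pow, norm_inv, RCLike.norm_natCast, ← mul_sum]
  field_simp
  linear_combination hsum
end
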